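/- Let X be a Noetherian scheme and D ⊆ X an effective Cartier divisor. The pair (D, X) is normal (every finite modification of X centered at D is an isomorphism) if and only if X is regular at all generic points of D and D has no embedded points. -/

import Mathlib

/-!
Let `q = (g : x)` be an associated prime of `R ⧸ (g)` and `t = x / g ∈ R[1/g]`, so that
`t q ⊆ R`. If `t q ⊆ q`, the ring `{u ∈ R[1/g] | u q ⊆ q}` is a finite modification of `R`
centered at `g` (it embeds into `q` by `u ↦ u g`) containing `t ∉ R`; so in a normal pair some
`z ∈ q` has `w = t z ∉ q`, and then `q w ⊆ z R`. Hence `z` generates the maximal ideal of `R_q`,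
so `R_q` is a discrete valuation ring; as its only nonzero prime is maximal, `q` is minimal
over `g`.

Conversely, let `R ⊆ S` be a finite modification with `g ^ n S ⊆ R`; its associated primes
avoid `g`, so `g` is a nonzerodivisor on `S`. If `s ∈ S` and `g s = a ∈ R`, then `a / g` is
integral over every localization `R_P`, `P ∈ Ass(R ⧸ (g))`, which is a discrete valuation ring;
so `g ∣ a` in each such `R_P`, hence in `R`, and `s ∈ R`. Induction on `n` gives `S = R`.
-/

/-- The pair (V(I), Spec R) is normal: every finite modification centered at V(I)
(finite ring map with kernel and cokernel killed by a power of I, no associated prime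
of the target containing the extended ideal) is an isomorphism. -/
def IsNormalPair (R : Type) [CommRing R] (I : Ideal R) : Prop :=
  ∀ (S : Type) (_ : CommRing S) (φ : R →+* S),
    (letI := φ.toAlgebra; Module.Finite R S) →
    (∃ n : ℕ,
      (∀ x ∈ RingHom.ker φ, ∀ y ∈ I ^ n, y * x = 0) ∧
      (∀ s : S, ∀ y ∈ I ^ n, φ y * s ∈ φ.range)) →
    (∀ q ∈ associatedPrimes S S, ¬ Ideal.map φ I ≤ q) →
    Function.Bijective φ

open Polynomial IsLocalRing nonZeroDivisors

theorem Ideal.le_of_mem_associatedPrimes_quotient {R : Type*} [CommRing R] {I P : Ideal R}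
    (hP : P ∈ associatedPrimes R (R ⧸ I)) : I ≤ P := by
  simpa [Submodule.annihilator_top, Ideal.annihilator_quotient] using hP.annihilator_le

theorem Ideal.minimalPrimes_subset_associatedPrimes_quotient {R : Type*} [CommRing R]
    [IsNoetherianRing R] (I : Ideal R) : I.minimalPrimes ⊆ associatedPrimes R (R ⧸ I) := by
  simpa [Ideal.annihilator_quotient] using
    Module.associatedPrimes.minimalPrimes_annihilator_subset_associatedPrimes R (R ⧸ I)

theorem Ideal.Quotient.mem_colon_mk_iff {R : Type*} [CommRing R] {I : Ideal R} {r x : R} :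
    r ∈ (⊥ : Submodule R (R ⧸ I)).colon {Ideal.Quotient.mk I x} ↔ r * x ∈ I := by
  rw [Submodule.mem_colon_singleton, Submodule.mem_bot, Algebra.smul_def,
    Ideal.Quotient.algebraMap_eq, ← map_mul, Ideal.Quotient.eq_zero_iff_mem]

theorem IsAssociatedPrime.notMem_of_isSMulRegular {R M : Type*} [CommRing R] [AddCommGroup M]
    [Module R M] {I : Ideal R} (h : IsAssociatedPrime I M) {a : R} (ha : IsSMulRegular M a) :
    a ∉ I := by
  obtain ⟨hI, x, rfl⟩ := h
  rintro ⟨k, hk⟩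
  rw [Submodule.mem_colon_singleton, Submodule.mem_bot] at hk
  obtain rfl : x = 0 := (ha.pow k) (by simp only [hk, smul_zero])
  exact hI.ne_top (by rw [Submodule.colon_singleton_zero, Ideal.radical_top])

section LocalRing

variable {A : Type*} [CommRing A] [IsLocalRing A] [IsNoetherianRing A] {t : A}

theorem IsLocalRing.exists_eq_pow_mul_of_maximalIdeal_eq_span
    (hm : maximalIdeal A = Ideal.span {t}) {x : A} (hx : x ≠ 0) :
    ∃ (i : ℕ) (u : A), IsUnit u ∧ x = t ^ i * u := by
  have hfin : FiniteMultiplicity t x := by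
    by_contra h
    rw [FiniteMultiplicity.not_iff_forall] at h
    apply hx
    rw [← Ideal.mem_bot,
      ← Ideal.iInf_pow_eq_bot_of_isLocalRing _ (maximalIdeal.isMaximal A).ne_top,
      Submodule.mem_iInf]
    intro n
    rw [hm, Ideal.span_singleton_pow, Ideal.mem_span_singleton]
    exact h n
  obtain ⟨u, hxu, hu⟩ := hfin.exists_eq_pow_mul_and_not_dvd
  refine ⟨_, u, ?_, hxu⟩
  by_contra hnu
  rw [← Ideal.mem_span_singleton, ← hm] at hu
  exact hu hnu

theorem IsLocalRing.isDomain_of_maximalIdeal_eq_span (ht : t ∈ A⁰)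
    (hm : maximalIdeal A = Ideal.span {t}) : IsDomain A := by
  refine @NoZeroDivisors.to_isDomain A _ _ ⟨fun {x y} hxy => ?_⟩
  by_contra! h
  obtain ⟨i, u, hu, rfl⟩ := exists_eq_pow_mul_of_maximalIdeal_eq_span hm h.1
  obtain ⟨j, v, hv, rfl⟩ := exists_eq_pow_mul_of_maximalIdeal_eq_span hm h.2
  have huv : u * v * t ^ (i + j) = 0 := by rw [← hxy]; ring
  exact (hu.mul hv).ne_zero (mem_nonZeroDivisors_iff_right.mp (pow_mem ht _) _ huv)

theorem IsLocalRing.isDiscreteValuationRing_of_maximalIdeal_eq_span [IsDomain A] (ht : t ≠ 0)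
    (hm : maximalIdeal A = Ideal.span {t}) : IsDiscreteValuationRing A := by
  refine .ofHasUnitMulPowIrreducibleFactorization
    ⟨t, IsDiscreteValuationRing.irreducible_of_span_eq_maximalIdeal t ht hm, fun hx => ?_⟩
  obtain ⟨i, u, hu, rfl⟩ := exists_eq_pow_mul_of_maximalIdeal_eq_span hm hx
  exact ⟨i, associated_mul_unit_right _ _ hu⟩

end LocalRing

theorem IsIntegrallyClosed.dvd_of_eval_scaleRoots_eq_zero {A : Type*} [CommRing A] [IsDomain A]
    [IsIntegrallyClosed A] {p : A[X]} (hp : p.Monic) {a b : A} (hb : b ≠ 0)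
    (h : (p.scaleRoots b).eval a = 0) : b ∣ a := by
  let K := FractionRing A
  have hb' : algebraMap A K b ≠ 0 :=
    IsFractionRing.to_map_ne_zero_of_mem_nonZeroDivisors (mem_nonZeroDivisors_of_ne_zero hb)
  set y := algebraMap A K a / algebraMap A K b
  have hy : IsIntegral A y := by
    have := scaleRoots_eval₂_mul (p := p) (algebraMap A K) y b
    rw [mul_div_cancel₀ _ hb', eval₂_at_apply, h, map_zero] at this
    exact ⟨p, hp, (mul_eq_zero.mp this.symm).resolve_left (pow_ne_zero _ hb')⟩
  obtain ⟨k, hk⟩ := IsIntegrallyClosed.algebraMap_eq_of_integral hy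
  exact ⟨k, IsFractionRing.injective A K (by rw [map_mul, hk, mul_div_cancel₀ _ hb'])⟩

theorem dvd_of_eval_scaleRoots_eq_zero_of_forall_associatedPrimes {R : Type*} [CommRing R]
    [IsNoetherianRing R] {g : R} (hg : g ∈ R⁰)
    (hreg : ∀ (P : Ideal R) [P.IsPrime], P ∈ associatedPrimes R (R ⧸ Ideal.span {g}) →
      ∃ t ∈ (Localization.AtPrime P)⁰, maximalIdeal (Localization.AtPrime P) = Ideal.span {t})
    {p : R[X]} (hp : p.Monic) {a : R} (h : (p.scaleRoots g).eval a = 0) : g ∣ a := by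
  by_contra hga
  have hne : Ideal.Quotient.mk (Ideal.span {g}) a ≠ 0 := by
    rwa [Ne, Ideal.Quotient.eq_zero_iff_mem, Ideal.mem_span_singleton]
  obtain ⟨P, hP, hann⟩ := exists_le_isAssociatedPrime_of_isNoetherianRing R _ hne
  have := hP.isPrime
  let φ := algebraMap R (Localization.AtPrime P)
  obtain ⟨t, ht, hm⟩ := hreg P hP
  have := isDomain_of_maximalIdeal_eq_span ht hm
  have := isDiscreteValuationRing_of_maximalIdeal_eq_span (nonZeroDivisors.ne_zero ht) hm
  have hgP : φ g ≠ 0 :=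
    nonZeroDivisors.ne_zero (IsLocalization.nonZeroDivisors_le_comap P.primeCompl _ hg)
  have hdvd : φ g ∣ φ a := by
    refine IsIntegrallyClosed.dvd_of_eval_scaleRoots_eq_zero (hp.map φ) hgP ?_
    rw [← map_scaleRoots _ _ _ (by simp [hp.leadingCoeff]), eval_map, eval₂_at_apply, h,
      map_zero]
  rw [← Ideal.mem_span_singleton, ← Set.image_singleton, ← Ideal.map_span,
    IsLocalization.algebraMap_mem_map_algebraMap_iff P.primeCompl] at hdvd
  obtain ⟨u, hu, hua⟩ := hdvd
  exact hu (hann (Ideal.Quotient.mem_colon_mk_iff.mpr hua))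

theorem mem_range_of_mul_mem_range {R S : Type*} [CommRing R] [CommRing S] [Algebra R S]
    [Algebra.IsIntegral R S] (hinj : Function.Injective (algebraMap R S)) {g : R}
    (hgS : algebraMap R S g ∈ S⁰)
    (hdvd : ∀ p : R[X], p.Monic → ∀ a, (p.scaleRoots g).eval a = 0 → g ∣ a) {s : S}
    (hs : algebraMap R S g * s ∈ (algebraMap R S).range) : s ∈ (algebraMap R S).range := by
  obtain ⟨a, ha⟩ := hs
  obtain ⟨p, hp, hps⟩ := Algebra.IsIntegral.isIntegral (R := R) s
  obtain ⟨e, rfl⟩ := hdvd p hp a <| hinj <| by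
    rw [map_zero, ← eval₂_at_apply, ha, scaleRoots_eval₂_mul, hps, mul_zero]
  refine ⟨e, ?_⟩
  rwa [map_mul, mul_cancel_left_mem_nonZeroDivisors hgS] at ha

theorem mem_range_of_pow_mul_mem_range {R S : Type*} [CommRing R] [CommRing S] [Algebra R S]
    [Algebra.IsIntegral R S] (hinj : Function.Injective (algebraMap R S)) {g : R}
    (hgS : algebraMap R S g ∈ S⁰)
    (hdvd : ∀ p : R[X], p.Monic → ∀ a, (p.scaleRoots g).eval a = 0 → g ∣ a) (n : ℕ)
    {s : S} (hs : algebraMap R S g ^ n * s ∈ (algebraMap R S).range) :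
    s ∈ (algebraMap R S).range := by
  induction n generalizing s with
  | zero => simpa using hs
  | succ n ih =>
    rw [pow_succ, mul_assoc] at hs
    exact mem_range_of_mul_mem_range hinj hgS hdvd (ih hs)

theorem isNormalPair_span_singleton_of_forall_associatedPrimes {R : Type} [CommRing R]
    [IsNoetherianRing R] {g : R} (hg : g ∈ R⁰)
    (hreg : ∀ (P : Ideal R) [P.IsPrime], P ∈ associatedPrimes R (R ⧸ Ideal.span {g}) →
      ∃ t ∈ (Localization.AtPrime P)⁰,
        maximalIdeal (Localization.AtPrime P) = Ideal.span {t}) :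
    IsNormalPair R (Ideal.span {g}) := by
  intro S _ φ hfin ⟨n, hker, hcoker⟩ hass
  let := φ.toAlgebra
  have := IsNoetherianRing.of_finite R S
  have := Algebra.IsIntegral.of_finite R S
  have hgn : g ^ n ∈ Ideal.span {g} ^ n := by
    rw [Ideal.span_singleton_pow]; exact Ideal.mem_span_singleton_self _
  have hinj : Function.Injective φ := (injective_iff_map_eq_zero φ).mpr fun a ha =>
    mem_nonZeroDivisors_iff_right.mp (pow_mem hg n) a (by rw [mul_comm]; exact hker a ha _ hgn)
  have hgS : φ g ∈ S⁰ := by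
    by_contra hgS
    obtain ⟨Q, hQ, hgQ⟩ : ∃ Q ∈ associatedPrimes S S, φ g ∈ Q := by
      simpa using (biUnion_associatedPrimes_eq_compl_nonZeroDivisors S).ge hgS
    exact hass Q hQ (by rwa [Ideal.map_span, Set.image_singleton, Ideal.span_singleton_le_iff_mem])
  refine ⟨hinj, fun s => mem_range_of_pow_mul_mem_range hinj hgS
    (fun p hp a h => dvd_of_eval_scaleRoots_eq_zero_of_forall_associatedPrimes hg hreg hp h) n ?_⟩
  rw [← map_pow]
  exact hcoker s _ hgn

def Submodule.mulStabilizer {R A : Type*} [CommRing R] [CommRing A] [Algebra R A]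
    (N : Submodule R A) : Subalgebra R A where
  carrier := {u | ∀ m ∈ N, u * m ∈ N}
  mul_mem' {u v} hu hv m hm := by rw [mul_assoc]; exact hu _ (hv _ hm)
  add_mem' {u v} hu hv m hm := by rw [add_mul]; exact N.add_mem (hu _ hm) (hv _ hm)
  algebraMap_mem' r m hm := by rw [← Algebra.smul_def]; exact N.smul_mem r hm

theorem Submodule.finite_mulStabilizer {R A : Type*} [CommRing R] [CommRing A] [Algebra R A]
    (N : Submodule R A) [IsNoetherian R N] {e : A} (he : e ∈ N) (he' : e ∈ A⁰) :
    Module.Finite R N.mulStabilizer := by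
  let ψ : N.mulStabilizer →ₗ[R] N :=
    ((LinearMap.mulRight R e).comp (Subalgebra.val _).toLinearMap).codRestrict N
      fun u => u.2 e he
  refine Module.Finite.of_injective ψ fun u v huv => Subtype.ext ?_
  exact (mul_cancel_right_mem_nonZeroDivisors he').mp (congrArg Subtype.val huv)

theorem IsNormalPair.surjective_algebraMap {R : Type} [CommRing R] {I : Ideal R}
    (h : IsNormalPair R I) (S : Type) [CommRing S] [Algebra R S] [Module.Finite R S]
    (hinj : Function.Injective (algebraMap R S)) (n : ℕ)
    (hcoker : ∀ s : S, ∀ y ∈ I ^ n, algebraMap R S y * s ∈ (algebraMap R S).range)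
    (hass : ∀ Q ∈ associatedPrimes S S, ¬ I.map (algebraMap R S) ≤ Q) :
    Function.Surjective (algebraMap R S) := by
  refine (h S _ _ (by rwa [toAlgebra_algebraMap]) ⟨n, fun x hx y _ => ?_, hcoker⟩ hass).2
  rw [(injective_iff_map_eq_zero _).mp hinj x hx, mul_zero]

theorem IsNormalPair.exists_algebraMap_eq_of_mul_mem {R : Type} [CommRing R] [IsNoetherianRing R]
    {g : R} (hg : g ∈ R⁰) (h : IsNormalPair R (Ideal.span {g})) {q : Ideal R} (hgq : g ∈ q)
    {t : Localization.Away g}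
    (ht : ∀ z ∈ q, ∃ z' ∈ q, algebraMap R _ z' = t * algebraMap R _ z) :
    ∃ r, algebraMap R _ r = t := by
  let N : Submodule R (Localization.Away g) := Submodule.map (Algebra.linearMap R _) q
  have hgA : IsUnit (algebraMap R (Localization.Away g) g) :=
    IsLocalization.Away.algebraMap_isUnit g
  have hgN : algebraMap R _ g ∈ N := ⟨g, hgq, rfl⟩
  have htS : t ∈ N.mulStabilizer := by
    rintro _ ⟨z, hz, rfl⟩
    obtain ⟨z', hz', hzt⟩ := ht z hz
    exact ⟨z', hz', hzt⟩
  have : IsNoetherian R N := isNoetherian_of_fg_of_noetherian N ((IsNoetherian.noetherian q).map _)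
  have := N.finite_mulStabilizer hgN hgA.mem_nonZeroDivisors
  have hinj : Function.Injective (algebraMap R N.mulStabilizer) := fun a b hab =>
    IsLocalization.injective (M := Submonoid.powers g) _ (Submonoid.powers_le.mpr hg)
      (congrArg Subtype.val hab)
  have hcoker (s : N.mulStabilizer) (y : R) (hy : y ∈ Ideal.span {g} ^ 1) :
      algebraMap R N.mulStabilizer y * s ∈ (algebraMap R N.mulStabilizer).range := by
    obtain ⟨d, rfl⟩ := Ideal.mem_span_singleton.mp (pow_one (Ideal.span {g}) ▸ hy)
    obtain ⟨z, -, hz⟩ := s.2 _ hgN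
    have hz : algebraMap R (Localization.Away g) z = s * algebraMap R _ g := hz
    exact ⟨z * d, Subtype.ext (by simp [hz]; ring)⟩
  have hass (Q : Ideal N.mulStabilizer) (hQ : Q ∈ associatedPrimes _ N.mulStabilizer) :
      ¬ (Ideal.span {g}).map (algebraMap R N.mulStabilizer) ≤ Q := by
    rw [Ideal.map_span, Set.image_singleton, Ideal.span_singleton_le_iff_mem]
    exact hQ.notMem_of_isSMulRegular fun u v huv =>
      Subtype.ext (hgA.mul_left_cancel (congrArg Subtype.val huv))
  obtain ⟨r, hr⟩ := h.surjective_algebraMap _ hinj 1 hcoker hass ⟨t, htS⟩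
  exact ⟨r, congrArg Subtype.val hr⟩

theorem IsNormalPair.exists_dvd_mul_of_mem_associatedPrimes {R : Type} [CommRing R]
    [IsNoetherianRing R] {g : R} (hg : g ∈ R⁰) (h : IsNormalPair R (Ideal.span {g}))
    {q : Ideal R} (hq : q ∈ associatedPrimes R (R ⧸ Ideal.span {g})) :
    ∃ z ∈ q, ∃ w ∉ q, ∀ z' ∈ q, z ∣ z' * w := by
  obtain ⟨hqp, y, hqy⟩ := isAssociatedPrime_iff.mp hq
  obtain ⟨x, rfl⟩ := Ideal.Quotient.mk_surjective y
  have hmem (r : R) : r ∈ q ↔ g ∣ r * x := by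
    rw [hqy, Ideal.Quotient.mem_colon_mk_iff, Ideal.mem_span_singleton]
  let t := IsLocalization.mk' (Localization.Away g) x ⟨g, Submonoid.mem_powers g⟩
  have hinj := IsLocalization.injective (Localization.Away g) (Submonoid.powers_le.mpr hg)
  have hgq : g ∈ q := (hmem g).mpr (dvd_mul_right g x)
  have ht {z m : R} (hzm : z * x = g * m) : t * algebraMap R _ z = algebraMap R _ m := by
    rw [mul_comm, IsLocalization.mul_mk'_eq_mk'_of_mul, IsLocalization.mk'_eq_iff_eq_mul,
      ← map_mul, hzm, mul_comm]
  obtain ⟨z, hzq, hz⟩ :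
      ∃ z ∈ q, ¬ ∃ z' ∈ q, algebraMap R _ z' = t * algebraMap R _ z := by
    by_contra! H
    obtain ⟨r, hr⟩ := h.exists_algebraMap_eq_of_mul_mem hg hgq H
    refine hqp.ne_top ((Ideal.eq_top_iff_one q).mpr ((hmem 1).mpr ⟨r, hinj ?_⟩))
    rw [one_mul, map_mul, hr, mul_comm, IsLocalization.mk'_spec]
  obtain ⟨w, hw⟩ := (hmem z).mp hzq
  refine ⟨z, hzq, w, fun hwq => hz ⟨w, hwq, (ht hw).symm⟩, fun z' hz' => ?_⟩
  obtain ⟨c, hc⟩ := (hmem z').mp hz'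
  refine ⟨c, (mul_cancel_left_mem_nonZeroDivisors hg).mp ?_⟩
  linear_combination z * hc - z' * hw

theorem Localization.AtPrime.maximalIdeal_eq_span_of_dvd_mul {R : Type*} [CommRing R]
    {q : Ideal R} [q.IsPrime] {z w : R} (hz : z ∈ q) (hw : w ∉ q)
    (h : ∀ z' ∈ q, z ∣ z' * w) :
    maximalIdeal (Localization.AtPrime q) = Ideal.span {algebraMap R _ z} := by
  have hwu : IsUnit (algebraMap R (Localization.AtPrime q) w) :=
    IsLocalization.map_units _ (⟨w, hw⟩ : q.primeCompl)
  rw [← Localization.AtPrime.map_eq_maximalIdeal]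
  refine le_antisymm (Ideal.map_le_iff_le_comap.mpr fun z' hz' => ?_) ?_
  · rw [Ideal.mem_comap, Ideal.mem_span_singleton, ← hwu.dvd_mul_right, ← map_mul]
    exact map_dvd _ (h z' hz')
  · rw [Ideal.span_le, Set.singleton_subset_iff]
    exact Ideal.mem_map_of_mem _ hz

theorem mem_minimalPrimes_of_isDiscreteValuationRing_atPrime {R : Type*} [CommRing R]
    {I q : Ideal R} [q.IsPrime] [IsDomain (Localization.AtPrime q)]
    [IsDiscreteValuationRing (Localization.AtPrime q)] (hIq : I ≤ q) {g : R} (hgI : g ∈ I)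
    (hg : algebraMap R (Localization.AtPrime q) g ≠ 0) : q ∈ I.minimalPrimes := by
  refine ⟨⟨inferInstance, hIq⟩, fun p ⟨hp, hIp⟩ hpq => ?_⟩
  have hd : Disjoint (q.primeCompl : Set R) p :=
    Set.disjoint_left.mpr fun a ha hap => ha (hpq hap)
  have hpP :=
    IsLocalization.isPrime_of_isPrime_disjoint q.primeCompl (Localization.AtPrime q) p hp hd
  have hne : p.map (algebraMap R (Localization.AtPrime q)) ≠ ⊥ := fun h0 =>
    hg (by rw [← Ideal.mem_bot, ← h0]; exact Ideal.mem_map_of_mem _ (hIp hgI))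
  rw [← IsLocalization.under_map_of_isPrime_disjoint q.primeCompl (Localization.AtPrime q) hp hd,
    eq_maximalIdeal (hpP.isMaximal hne), Localization.AtPrime.under_maximalIdeal]

theorem IsNormalPair.exists_maximalIdeal_eq_span_of_mem_associatedPrimes {R : Type}
    [CommRing R] [IsNoetherianRing R] {g : R} (hg : g ∈ R⁰) (h : IsNormalPair R (Ideal.span {g}))
    {q : Ideal R} [q.IsPrime] (hq : q ∈ associatedPrimes R (R ⧸ Ideal.span {g})) :
    ∃ t ∈ (Localization.AtPrime q)⁰,
      maximalIdeal (Localization.AtPrime q) = Ideal.span {t} := by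
  obtain ⟨z, hz, w, hw, hdvd⟩ := h.exists_dvd_mul_of_mem_associatedPrimes hg hq
  refine ⟨algebraMap R _ z, ?_, Localization.AtPrime.maximalIdeal_eq_span_of_dvd_mul hz hw hdvd⟩
  have hwu := IsLocalization.map_units (Localization.AtPrime q) (⟨w, hw⟩ : q.primeCompl)
  have hgq := IsLocalization.nonZeroDivisors_le_comap q.primeCompl (Localization.AtPrime q) hg
  obtain ⟨c, hc⟩ := hdvd g (Ideal.le_of_mem_associatedPrimes_quotient hq
    (Ideal.mem_span_singleton_self g))
  have hzc : algebraMap R (Localization.AtPrime q) z * algebraMap R _ c ∈ _⁰ := by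
    rw [← map_mul, ← hc, map_mul]
    exact mul_mem hgq hwu.mem_nonZeroDivisors
  exact (mul_mem_nonZeroDivisors.mp hzc).1

theorem IsNormalPair.mem_minimalPrimes_of_mem_associatedPrimes {R : Type} [CommRing R]
    [IsNoetherianRing R] {g : R} (hg : g ∈ R⁰) (h : IsNormalPair R (Ideal.span {g}))
    {q : Ideal R} (hq : q ∈ associatedPrimes R (R ⧸ Ideal.span {g})) :
    q ∈ (Ideal.span {g}).minimalPrimes := by
  have := hq.isPrime
  obtain ⟨t, ht, hm⟩ := h.exists_maximalIdeal_eq_span_of_mem_associatedPrimes hg hq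
  have := isDomain_of_maximalIdeal_eq_span ht hm
  have := isDiscreteValuationRing_of_maximalIdeal_eq_span (nonZeroDivisors.ne_zero ht) hm
  exact mem_minimalPrimes_of_isDiscreteValuationRing_atPrime
    (Ideal.le_of_mem_associatedPrimes_quotient hq) (Ideal.mem_span_singleton_self g)
    (nonZeroDivisors.ne_zero (IsLocalization.nonZeroDivisors_le_comap q.primeCompl _ hg))

/-- For an effective Cartier divisor D = (g = 0) on a Noetherian (affine)
scheme, the pair (D, X) is normal iff X is regular (a 1-dimensional regular local ring)
at all generic points of D and D has no embedded points. -/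
theorem stmt11 (R : Type) [CommRing R] [IsNoetherianRing R]
    (g : R) (hg : g ∈ nonZeroDivisors R) :
    IsNormalPair R (Ideal.span ({g} : Set R)) ↔
      ((∀ p : Ideal R, ∀ hp : p ∈ (Ideal.span ({g} : Set R)).minimalPrimes,
          haveI : p.IsPrime := hp.1.1
          ∃ t : Localization.AtPrime p, t ∈ nonZeroDivisors (Localization.AtPrime p) ∧
            IsLocalRing.maximalIdeal (Localization.AtPrime p) = Ideal.span {t}) ∧
        (∀ q ∈ associatedPrimes R (R ⧸ Ideal.span ({g} : Set R)),
          q ∈ (Ideal.span ({g} : Set R)).minimalPrimes)) := by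
  constructor
  · intro h
    refine ⟨fun p hp => ?_, fun q hq => h.mem_minimalPrimes_of_mem_associatedPrimes hg hq⟩
    have := hp.1.1
    exact h.exists_maximalIdeal_eq_span_of_mem_associatedPrimes hg
      (Ideal.minimalPrimes_subset_associatedPrimes_quotient _ hp)
  · rintro ⟨hreg, hass⟩
    exact isNormalPair_span_singleton_of_forall_associatedPrimes hg
      fun P _ hP => hreg P (hass P hP)
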